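/- (Partial q-difference equation in x for 2D q-Appell polynomials.) Assume a_0 ≠ 0. Then for every n ≥ 1: Σ_{k=1}^{n} (q^{n−k}/[k]_q!) (α_k + [k]_q β_{k−1} y) D_{q,x}^{k} A_{n,q}(x,y) + q^{n} x · D_{q,x} A_{n,q}(x,y) − [n]_q · A_{n,q}(qx,y) = 0, where A_{n,q}(qx,y) denotes the polynomial obtained from A_{n,q}(x,y) by substituting qx for x. -/

import Mathlib

set_option maxHeartbeats 1000000

noncomputable section

open Finset MvPolynomial

/-- The `q`-integer `[n]_q = 1 + q + ⋯ + q^(n-1)`. -/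
def qInt {K : Type*} [Field K] (q : K) (n : ℕ) : K := ∑ i ∈ Finset.range n, q ^ i

/-- The `q`-factorial `[n]_q! = [1]_q [2]_q ⋯ [n]_q`. -/
def qFact {K : Type*} [Field K] (q : K) (n : ℕ) : K := ∏ k ∈ Finset.range n, qInt q (k + 1)

/-- The `q`-binomial coefficient `[n choose k]_q`. -/
def qChoose {K : Type*} [Field K] (q : K) (n k : ℕ) : K :=
  qFact q n / (qFact q k * qFact q (n - k))

/-- The partial `q`-derivative in the variable `v` (v = 0 is `x`, v = 1 is `y`),
the linear operator determined by `D_{q,x}(x^m y^l) = [m]_q x^(m-1) y^l` and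
`D_{q,y}(x^m y^l) = [l]_q x^m y^(l-1)`. -/
def qDeriv {K : Type*} [Field K] (q : K) (v : Fin 2) (P : MvPolynomial (Fin 2) K) :
    MvPolynomial (Fin 2) K :=
  ∑ m ∈ P.support, monomial (m - Finsupp.single v 1) (P.coeff m * qInt q (m v))

/-- Substitution `x ↦ c·x` in a polynomial in the two variables `x = X 0`, `y = X 1`. -/
def substX {K : Type*} [Field K] (c : K) (P : MvPolynomial (Fin 2) K) :
    MvPolynomial (Fin 2) K :=
  aeval (fun i : Fin 2 => if i = 0 then C c * X 0 else X 1) P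

/-- Substitution `y ↦ c·y` in a polynomial in the two variables `x = X 0`, `y = X 1`. -/
def substY {K : Type*} [Field K] (c : K) (P : MvPolynomial (Fin 2) K) :
    MvPolynomial (Fin 2) K :=
  aeval (fun i : Fin 2 => if i = 0 then X 0 else C c * X 1) P

/-- The 2D `q`-Appell polynomials attached to a coefficient sequence `a`:
`A_{n,q}(x,y) = Σ_{i+j+k=n} ([n]_q!/([i]_q![j]_q![k]_q!)) a_i q^(k(k-1)/2) x^j y^k`. -/
def appell {K : Type*} [Field K] (q : K) (a : ℕ → K) (n : ℕ) : MvPolynomial (Fin 2) K :=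
  ∑ i ∈ Finset.range (n + 1), ∑ j ∈ Finset.range (n + 1 - i),
    monomial (Finsupp.single (0 : Fin 2) j + Finsupp.single (1 : Fin 2) (n - i - j))
      (qFact q n / (qFact q i * qFact q j * qFact q (n - i - j)) * a i *
        q ^ ((n - i - j) * (n - i - j - 1) / 2))

/-! Compare the coefficients of `x^j y^l`. Writing `m = n - j - l` and `b_i = a_i / [i]_q!`,
that coefficient of `A_{n,q}` is `[n]_q! / ([j]_q! [l]_q!) · q^(l(l-1)/2) · b_m`, and each of the
four terms of the equation contributes it times a scalar. Since `D_{q,x}^k` shifts `A_{n,q}` to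
`A_{n-k,q}` up to factorials, the `α`-sum collapses through the coefficient form
`Σ_k α_k/[k]_q! · q^(m-k) b_(m-k) = [m]_q b_m` of `t D_q A_q(t) = α(t) A_q(qt)` to `q^(j+l) [m]_q`,
and the `β`-sum through `Σ_k β_k/[k]_q! · q^(m-k) b_(m-k) = b_m` to `q^j [l]_q`; moreover
`x D_{q,x}` contributes `[j]_q` and `x ↦ qx` contributes `q^j`. What remains is
`q^j [l+m+j]_q = q^j ([l]_q + q^l [m]_q + q^(l+m) [j]_q)`. -/

section

variable {K : Type*} [Field K]

lemma qInt_zero (q : K) : qInt q 0 = 0 := by simp [qInt]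

lemma qInt_add (q : K) (a b : ℕ) : qInt q (a + b) = qInt q a + q ^ a * qInt q b := by
  simp [qInt, sum_range_add, mul_sum, pow_add]

lemma qFact_zero (q : K) : qFact q 0 = 1 := by simp [qFact]

lemma qFact_succ (q : K) (n : ℕ) : qFact q (n + 1) = qFact q n * qInt q (n + 1) :=
  prod_range_succ _ _

lemma qFact_add (q : K) (a b : ℕ) :
    qFact q (a + b) = qFact q a * ∏ i ∈ range b, qInt q (a + i + 1) := by
  simp [qFact, prod_range_add, add_assoc]

lemma qFact_ne_zero {q : K} (hq : ∀ n, 1 ≤ n → qInt q n ≠ 0) (n : ℕ) : qFact q n ≠ 0 :=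
  prod_ne_zero_iff.2 fun k _ => hq (k + 1) (Nat.le_add_left 1 k)

lemma coeff_qDeriv (q : K) (v : Fin 2) (P : MvPolynomial (Fin 2) K) (d : Fin 2 →₀ ℕ) :
    coeff d (qDeriv q v P) = qInt q (d v + 1) * coeff (d + Finsupp.single v 1) P := by
  have hterm : ∀ m : Fin 2 →₀ ℕ,
      (if m - Finsupp.single v 1 = d then P.coeff m * qInt q (m v) else 0) =
        if d + Finsupp.single v 1 = m then P.coeff m * qInt q (m v) else 0 := by
    intro m
    by_cases hm : m v = 0
    · have : d + Finsupp.single v 1 ≠ m := fun h => by simp [← h] at hm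
      simp [hm, qInt_zero, this]
    · refine if_congr ?_ rfl rfl
      rw [tsub_eq_iff_eq_add_of_le (Finsupp.single_le_iff.2 (Nat.one_le_iff_ne_zero.2 hm)),
        eq_comm]
  simp only [qDeriv, coeff_sum, coeff_monomial, hterm, sum_ite_eq]
  split_ifs with h
  · simp [mul_comm]
  · simp [notMem_support_iff.1 h]

lemma coeff_qDeriv_iterate (q : K) (v : Fin 2) (k : ℕ) (P : MvPolynomial (Fin 2) K)
    (d : Fin 2 →₀ ℕ) :
    coeff d ((qDeriv q v)^[k] P) =
      (∏ i ∈ range k, qInt q (d v + i + 1)) * coeff (d + Finsupp.single v k) P := by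
  induction k generalizing d with
  | zero => simp
  | succ k ih =>
    rw [Function.iterate_succ_apply', coeff_qDeriv, ih, prod_range_succ', add_assoc,
      ← Finsupp.single_add, add_comm 1 k]
    have h : ∀ i, d v + 1 + i + 1 = d v + (i + 1) + 1 := fun i => by omega
    simp only [Finsupp.add_apply, Finsupp.single_eq_same, h, add_zero]
    ring

lemma coeff_X_mul_qDeriv (q : K) (v : Fin 2) (P : MvPolynomial (Fin 2) K) (d : Fin 2 →₀ ℕ) :
    coeff d (X v * qDeriv q v P) = qInt q (d v) * coeff d P := by
  rw [coeff_X_mul']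
  split_ifs with h
  · have hv : 1 ≤ d v := Nat.one_le_iff_ne_zero.2 (Finsupp.mem_support_iff.1 h)
    rw [coeff_qDeriv, tsub_add_cancel_of_le (Finsupp.single_le_iff.2 hv)]
    simp only [Finsupp.coe_tsub, Pi.sub_apply, Finsupp.single_eq_same, Nat.sub_add_cancel hv]
  · simp [Finsupp.notMem_support_iff.1 h, qInt_zero]

lemma substX_monomial (c : K) (e : Fin 2 →₀ ℕ) (r : K) :
    substX c (monomial e r) = monomial e (c ^ e 0 * r) := by
  rw [substX, aeval_monomial, monomial_eq, Finsupp.prod_fintype _ _ (by simp),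
    Finsupp.prod_fintype _ _ (by simp), Fin.prod_univ_two, Fin.prod_univ_two]
  simp only [if_true, if_neg one_ne_zero, algebraMap_eq, mul_pow, C_mul, C_pow]
  ring

lemma coeff_substX (c : K) (P : MvPolynomial (Fin 2) K) (d : Fin 2 →₀ ℕ) :
    coeff d (substX c P) = c ^ d 0 * coeff d P := by
  induction P using MvPolynomial.induction_on' with
  | monomial e r =>
    rw [substX_monomial, coeff_monomial, coeff_monomial]
    split_ifs with h <;> simp [h]
  | add P Q hP hQ =>
    rw [substX, map_add, coeff_add, ← substX, ← substX, hP, hQ, coeff_add, mul_add]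

def appellCoeff (q : K) (a : ℕ → K) (n j l : ℕ) : K :=
  if j + l ≤ n then
    qFact q n / (qFact q j * qFact q l) * q ^ (l * (l - 1) / 2) *
      (a (n - j - l) / qFact q (n - j - l))
  else 0

lemma single_add_single_eq_iff (j l : ℕ) (d : Fin 2 →₀ ℕ) :
    Finsupp.single 0 j + Finsupp.single 1 l = d ↔ j = d 0 ∧ l = d 1 := by
  constructor
  · rintro rfl; simp
  · rintro ⟨rfl, rfl⟩; ext i; fin_cases i <;> simp

lemma coeff_appell (q : K) (a : ℕ → K) (n : ℕ) (d : Fin 2 →₀ ℕ) :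
    coeff d (appell q a n) = appellCoeff q a n (d 0) (d 1) := by
  have hcond : ∀ i,
      (d 0 < n + 1 - i ∧ n - i - d 0 = d 1) ↔ (n - d 0 - d 1 = i ∧ d 0 + d 1 ≤ n) :=
    fun i => by omega
  simp only [appell, coeff_sum, coeff_monomial, single_add_single_eq_iff, ite_and, sum_ite_eq',
    mem_range]
  simp only [← ite_and, hcond]
  simp only [ite_and, sum_ite_eq, mem_range, if_pos (by omega : n - d 0 - d 1 < n + 1),
    appellCoeff]
  split_ifs with h
  · rw [show n - (n - d 0 - d 1) - d 0 = d 1 by omega]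
    ring
  · rfl

lemma prod_qInt_mul_appellCoeff {q : K} (hq : ∀ n, 1 ≤ n → qInt q n ≠ 0) (a : ℕ → K)
    (j k l m : ℕ) :
    (∏ i ∈ range k, qInt q (j + i + 1)) * appellCoeff q a (j + l + m) (j + k) l =
      if k ≤ m then
        qFact q (j + l + m) / (qFact q j * qFact q l) * q ^ (l * (l - 1) / 2) *
          (a (m - k) / qFact q (m - k))
      else 0 := by
  have hF := qFact_ne_zero hq
  have hP : (∏ i ∈ range k, qInt q (j + i + 1)) ≠ 0 :=
    prod_ne_zero_iff.2 fun i _ => hq _ (by omega)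
  rw [appellCoeff]
  by_cases hk : k ≤ m
  · rw [if_pos (by omega), if_pos hk, show j + l + m - (j + k) - l = m - k by omega,
      qFact_add q j k]
    field_simp [hF]
  · rw [if_neg (by omega), if_neg hk, mul_zero]

lemma appellCoeff_add_add {q : K} (hq : ∀ n, 1 ≤ n → qInt q n ≠ 0) (a : ℕ → K) (j l m : ℕ) :
    appellCoeff q a (j + l + m) j l =
      qFact q (j + l + m) / (qFact q j * qFact q l) * q ^ (l * (l - 1) / 2) *
        (a m / qFact q m) := by
  simpa using prod_qInt_mul_appellCoeff hq a j 0 l m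

lemma PowerSeries.coeff_mk_mul_mk {R : Type*} [Semiring R] (f g : ℕ → R) (m : ℕ) :
    coeff m (mk f * mk g) = ∑ k ∈ range (m + 1), f k * g (m - k) := by
  simp [coeff_mul, Nat.sum_antidiagonal_eq_sum_range_succ_mk]

lemma sum_alpha_convolution {q : K} (hq : ∀ n, 1 ≤ n → qInt q n ≠ 0) {a α : ℕ → K}
    (hα : PowerSeries.mk (fun n => if n = 0 then (0 : K) else a n / qFact q (n - 1)) =
      PowerSeries.mk (fun n => α n / qFact q n) *
        PowerSeries.mk (fun n => a n * q ^ n / qFact q n)) (m : ℕ) :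
    ∑ k ∈ range (m + 1), α k / qFact q k * (a (m - k) * q ^ (m - k) / qFact q (m - k)) =
      qInt q m * (a m / qFact q m) := by
  have h := congrArg (PowerSeries.coeff m) hα
  rw [PowerSeries.coeff_mk, PowerSeries.coeff_mk_mul_mk] at h
  rw [← h]
  rcases m with _ | m
  · simp [qInt_zero]
  · rw [if_neg m.succ_ne_zero, qFact_succ, Nat.add_sub_cancel]
    field_simp [qFact_ne_zero hq m, hq (m + 1) (by omega)]

lemma sum_beta_convolution {q : K} {a β : ℕ → K}
    (hβ : PowerSeries.mk (fun n => a n / qFact q n) =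
      PowerSeries.mk (fun n => β n / qFact q n) *
        PowerSeries.mk (fun n => a n * q ^ n / qFact q n)) (m : ℕ) :
    ∑ k ∈ range (m + 1), β k / qFact q k * (a (m - k) * q ^ (m - k) / qFact q (m - k)) =
      a m / qFact q m := by
  have h := congrArg (PowerSeries.coeff m) hβ
  rwa [PowerSeries.coeff_mk, PowerSeries.coeff_mk_mul_mk, eq_comm] at h

lemma sum_Icc_one_eq_sum_range {M : Type*} [AddCommMonoid M] (f : ℕ → M) (n : ℕ) :
    ∑ k ∈ Icc 1 n, f k = ∑ k ∈ range n, f (k + 1) := by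
  rw [← Ico_add_one_right_eq_Icc, sum_Ico_eq_sum_range]
  simp [add_comm]

lemma sum_Icc_one_eq_sum_range_succ {M : Type*} [AddCommMonoid M] {f : ℕ → M} (hf : f 0 = 0)
    (n : ℕ) : ∑ k ∈ Icc 1 n, f k = ∑ k ∈ range (n + 1), f k := by
  rw [sum_range_succ', hf, add_zero, sum_Icc_one_eq_sum_range]

lemma sum_range_ite_le {M : Type*} [AddCommMonoid M] (f : ℕ → M) {m N : ℕ} (h : m < N) :
    ∑ k ∈ range N, (if k ≤ m then f k else 0) = ∑ k ∈ range (m + 1), f k := by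
  rw [← sum_filter]
  congr 1
  ext k
  simp only [mem_filter, mem_range]
  omega

lemma sum_alpha_mul_coeff_qDeriv_iterate_appell {q : K} (hq : ∀ n, 1 ≤ n → qInt q n ≠ 0)
    {a α : ℕ → K} (ha0 : a 0 ≠ 0)
    (hα : ∀ m, ∑ k ∈ range (m + 1), α k / qFact q k * (a (m - k) * q ^ (m - k) / qFact q (m - k)) =
      qInt q m * (a m / qFact q m))
    (n : ℕ) (d : Fin 2 →₀ ℕ) :
    ∑ k ∈ Icc 1 n, q ^ (n - k) / qFact q k * α k * coeff d ((qDeriv q 0)^[k] (appell q a n)) =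
      q ^ (d 0 + d 1) * qInt q (n - d 0 - d 1) * coeff d (appell q a n) := by
  simp only [coeff_qDeriv_iterate, coeff_appell, Finsupp.coe_add, Pi.add_apply,
    Finsupp.single_eq_same, Finsupp.single_eq_of_ne one_ne_zero, add_zero]
  by_cases h : d 0 + d 1 ≤ n
  · obtain ⟨m, rfl⟩ := Nat.exists_eq_add_of_le h
    have hα0 : α 0 = 0 := by simpa [qFact_zero, qInt_zero, ha0] using hα 0
    rw [sum_Icc_one_eq_sum_range_succ (by simp [hα0])]
    simp only [prod_qInt_mul_appellCoeff hq, mul_ite, mul_zero]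
    rw [sum_range_ite_le _ (by omega : m < d 0 + d 1 + m + 1)]
    have hterm : ∀ k ∈ range (m + 1),
        q ^ (d 0 + d 1 + m - k) / qFact q k * α k *
          (qFact q (d 0 + d 1 + m) / (qFact q (d 0) * qFact q (d 1)) *
            q ^ (d 1 * (d 1 - 1) / 2) * (a (m - k) / qFact q (m - k))) =
        qFact q (d 0 + d 1 + m) / (qFact q (d 0) * qFact q (d 1)) *
            q ^ (d 1 * (d 1 - 1) / 2) * q ^ (d 0 + d 1) *
          (α k / qFact q k * (a (m - k) * q ^ (m - k) / qFact q (m - k))) := by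
      intro k hk
      rw [show d 0 + d 1 + m - k = d 0 + d 1 + (m - k) by have := mem_range.1 hk; omega, pow_add]
      ring
    rw [sum_congr rfl hterm, ← mul_sum, hα m, appellCoeff_add_add hq,
      show d 0 + d 1 + m - d 0 - d 1 = m by omega]
    ring
  · rw [sum_eq_zero, appellCoeff, if_neg h, mul_zero]
    intro k _
    rw [appellCoeff, if_neg (by omega), mul_zero, mul_zero]

lemma sum_beta_mul_coeff_X_mul_qDeriv_iterate_appell {q : K}
    (hq : ∀ n, 1 ≤ n → qInt q n ≠ 0) {a β : ℕ → K}
    (hβ : ∀ m, ∑ k ∈ range (m + 1), β k / qFact q k * (a (m - k) * q ^ (m - k) / qFact q (m - k)) =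
      a m / qFact q m)
    (n : ℕ) (d : Fin 2 →₀ ℕ) :
    ∑ k ∈ Icc 1 n, q ^ (n - k) / qFact q k * (qInt q k * β (k - 1)) *
        coeff d (X 1 * (qDeriv q 0)^[k] (appell q a n)) =
      q ^ d 0 * qInt q (d 1) * coeff d (appell q a n) := by
  rcases hl : d 1 with _ | l
  · simp [coeff_X_mul', hl, qInt_zero]
  have h1 : (1 : Fin 2) ∈ d.support := Finsupp.mem_support_iff.2 (by omega)
  simp only [coeff_X_mul', h1, if_true, coeff_qDeriv_iterate, coeff_appell, Finsupp.coe_tsub,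
    Finsupp.coe_add, Pi.sub_apply, Pi.add_apply, Finsupp.single_eq_same,
    Finsupp.single_eq_of_ne zero_ne_one, Finsupp.single_eq_of_ne one_ne_zero, tsub_zero, add_zero,
    hl, add_tsub_cancel_right, sum_Icc_one_eq_sum_range]
  by_cases h : d 0 + (l + 1) ≤ n
  · obtain ⟨m, rfl⟩ : ∃ m, n = d 0 + l + (m + 1) := ⟨n - d 0 - (l + 1), by omega⟩
    simp only [prod_qInt_mul_appellCoeff hq, mul_ite, mul_zero, add_le_add_iff_right,
      Nat.add_sub_add_right]
    rw [sum_range_ite_le _ (by omega : m < d 0 + l + (m + 1))]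
    have hterm : ∀ k ∈ range (m + 1),
        q ^ (d 0 + l + (m + 1) - (k + 1)) / qFact q (k + 1) * (qInt q (k + 1) * β k) *
          (qFact q (d 0 + l + (m + 1)) / (qFact q (d 0) * qFact q l) *
            q ^ (l * (l - 1) / 2) * (a (m - k) / qFact q (m - k))) =
        qFact q (d 0 + l + (m + 1)) / (qFact q (d 0) * qFact q l) *
            q ^ (l * (l - 1) / 2) * q ^ (d 0 + l) *
          (β k / qFact q k * (a (m - k) * q ^ (m - k) / qFact q (m - k))) := by
      intro k hk
      rw [show d 0 + l + (m + 1) - (k + 1) = d 0 + l + (m - k) by have := mem_range.1 hk; omega,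
        pow_add, qFact_succ]
      field_simp [qFact_ne_zero hq k, hq (k + 1) (by omega)]
    rw [sum_congr rfl hterm, ← mul_sum, hβ m, show d 0 + l + (m + 1) = d 0 + (l + 1) + m by omega,
      appellCoeff_add_add hq, qFact_succ, Nat.triangle_succ, pow_add, pow_add]
    field_simp [qFact_ne_zero hq, hq (l + 1) (by omega)]
  · rw [sum_eq_zero, appellCoeff, if_neg h, mul_zero]
    intro k _
    rw [appellCoeff, if_neg (by omega), mul_zero, mul_zero]

end

theorem appell_qDifference_x_general
    {K : Type*} [Field K] (q : K)
    (hq : ∀ n : ℕ, 1 ≤ n → qInt q n ≠ 0)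
    (a : ℕ → K) (ha0 : a 0 ≠ 0)
    (α β : ℕ → K)
    (hα : PowerSeries.mk (fun n => if n = 0 then (0 : K) else a n / qFact q (n - 1)) =
      PowerSeries.mk (fun n => α n / qFact q n) *
        PowerSeries.mk (fun n => a n * q ^ n / qFact q n))
    (hβ : PowerSeries.mk (fun n => a n / qFact q n) =
      PowerSeries.mk (fun n => β n / qFact q n) *
        PowerSeries.mk (fun n => a n * q ^ n / qFact q n))
    (n : ℕ) :
    (∑ k ∈ Finset.Icc 1 n, C (q ^ (n - k) / qFact q k) *
        (C (α k) + C (qInt q k * β (k - 1)) * X 1) * (qDeriv q 0)^[k] (appell q a n)) +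
      C (q ^ n) * X 0 * qDeriv q 0 (appell q a n) -
      C (qInt q n) * substX q (appell q a n) = 0 := by
  ext d
  have hsum : coeff d (∑ k ∈ Icc 1 n, C (q ^ (n - k) / qFact q k) *
        (C (α k) + C (qInt q k * β (k - 1)) * X 1) * (qDeriv q 0)^[k] (appell q a n)) =
      ∑ k ∈ Icc 1 n, q ^ (n - k) / qFact q k * α k * coeff d ((qDeriv q 0)^[k] (appell q a n)) +
      ∑ k ∈ Icc 1 n, q ^ (n - k) / qFact q k * (qInt q k * β (k - 1)) *
        coeff d (X 1 * (qDeriv q 0)^[k] (appell q a n)) := by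
    rw [coeff_sum, ← sum_add_distrib]
    refine sum_congr rfl fun k _ => ?_
    rw [mul_assoc, coeff_C_mul, add_mul, coeff_add, coeff_C_mul, mul_assoc, coeff_C_mul]
    ring
  rw [coeff_sub, coeff_add, hsum,
    sum_alpha_mul_coeff_qDeriv_iterate_appell hq ha0 (sum_alpha_convolution hq hα),
    sum_beta_mul_coeff_X_mul_qDeriv_iterate_appell hq (sum_beta_convolution hβ),
    mul_assoc (C (q ^ n)), coeff_C_mul, coeff_X_mul_qDeriv, coeff_C_mul, coeff_substX, coeff_zero]
  by_cases h : d 0 + d 1 ≤ n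
  · obtain ⟨m, rfl⟩ := Nat.exists_eq_add_of_le h
    rw [show d 0 + d 1 + m - d 0 - d 1 = m by omega, show d 0 + d 1 + m = d 1 + m + d 0 by ring,
      qInt_add, qInt_add]
    ring
  · rw [coeff_appell, appellCoeff, if_neg h]
    ring

/-- Partial `q`-difference equation in `x` for 2D `q`-Appell polynomials. -/
theorem appell_qDifference_x
    {K : Type*} [Field K] [CharZero K] (q : K) (hq0 : q ≠ 0) (hq1 : q ≠ 1)
    (hq : ∀ n : ℕ, 1 ≤ n → qInt q n ≠ 0)
    (a : ℕ → K) (ha0 : a 0 ≠ 0)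
    (α β : ℕ → K)
    (hα : PowerSeries.mk (fun n => if n = 0 then (0 : K) else a n / qFact q (n - 1)) =
      PowerSeries.mk (fun n => α n / qFact q n) *
        PowerSeries.mk (fun n => a n * q ^ n / qFact q n))
    (hβ : PowerSeries.mk (fun n => a n / qFact q n) =
      PowerSeries.mk (fun n => β n / qFact q n) *
        PowerSeries.mk (fun n => a n * q ^ n / qFact q n))
    (n : ℕ) (hn : 1 ≤ n) :
    (∑ k ∈ Finset.Icc 1 n, C (q ^ (n - k) / qFact q k) *
        (C (α k) + C (qInt q k * β (k - 1)) * X 1) * (qDeriv q 0)^[k] (appell q a n)) +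
      C (q ^ n) * X 0 * qDeriv q 0 (appell q a n) -
      C (qInt q n) * substX q (appell q a n) = 0 :=
  appell_qDifference_x_general q hq a ha0 α β hα hβ n
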